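/- arXiv:1112.1741 — 2 statements merged into one kernel-verified Lean document; each statement's English description precedes it below -/
import Mathlib

section
/- In 2D, setting τ_micro equal to the leading-order expression such that τ_D(h*) = τ_micro, the critical mesh size satisfies h* = L·exp(−2πD·τ_micro/L² + 0.1951·π/2); in particular, if τ_micro = (L²/(2πD))·(log(L/ρ) − 3/4 − log√π), then h* = √π·exp(0.1951·π/2 + 3/4)·ρ ≈ 5.1·ρ. -/
/-- In 2D, with `τ_micro = (L²/(2πD))(log(L/(√π ρ)) - 3/4)`, the critical mesh size
`h* = L exp(-2πDτ_micro/L² + 0.1951 π/2)` equals `√π exp(0.1951 π/2 + 3/4) ρ`,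
independently of `L` and `D`, and is numerically `≈ 5.1 ρ`. -/
theorem critical_mesh_size_value_2d (L D ρ : ℝ) (hL : 0 < L) (hD : 0 < D) (hρ : 0 < ρ) :
    L * Real.exp (-(2 * Real.pi * D *
          (L ^ 2 / (2 * Real.pi * D) * (Real.log (L / (Real.sqrt Real.pi * ρ)) - 3 / 4)))
          / L ^ 2 + 0.1951 * Real.pi / 2)
        = Real.sqrt Real.pi * Real.exp (0.1951 * Real.pi / 2 + 3 / 4) * ρ ∧
      |Real.sqrt Real.pi * Real.exp (0.1951 * Real.pi / 2 + 3 / 4) * ρ - 5.1 * ρ|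
        < 0.1 * ρ := by
  have hπ : 0 < Real.pi := Real.pi_pos
  have hsπ : 0 < Real.sqrt Real.pi := Real.sqrt_pos.mpr hπ
  constructor
  · have ht : 0 < L / (Real.sqrt Real.pi * ρ) := by positivity
    have harg : -(2 * Real.pi * D *
          (L ^ 2 / (2 * Real.pi * D) * (Real.log (L / (Real.sqrt Real.pi * ρ)) - 3 / 4)))
          / L ^ 2 + 0.1951 * Real.pi / 2
        = -Real.log (L / (Real.sqrt Real.pi * ρ)) + (0.1951 * Real.pi / 2 + 3 / 4) := by
      field_simp
      ring
    rw [harg, Real.exp_add, Real.exp_neg, Real.exp_log ht]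
    field_simp
  · -- numeric bounds
    have hpl := Real.pi_gt_d6
    have hpu := Real.pi_lt_d6
    have hs1 : Real.sqrt Real.pi < 1.7725 := by
      rw [show (1.7725 : ℝ) = Real.sqrt (1.7725 ^ 2) from
        (Real.sqrt_sq (by norm_num)).symm]
      exact Real.sqrt_lt_sqrt (le_of_lt hπ) (by nlinarith)
    have hs2 : (1.7724 : ℝ) < Real.sqrt Real.pi := by
      rw [show (1.7724 : ℝ) = Real.sqrt (1.7724 ^ 2) from
        (Real.sqrt_sq (by norm_num)).symm]
      exact Real.sqrt_lt_sqrt (by norm_num) (by nlinarith)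
    set a : ℝ := 0.1951 * Real.pi / 2 + 3 / 4 with ha
    have ha1 : (1.056 : ℝ) < a := by rw [ha]; nlinarith
    have ha2 : a < (1.057 : ℝ) := by rw [ha]; nlinarith
    have he1l : (2.7182818283 : ℝ) < Real.exp 1 := Real.exp_one_gt_d9
    have he1u : Real.exp 1 < (2.7182818286 : ℝ) := Real.exp_one_lt_d9
    -- lower bound for exp a
    have hexp_lo : (2.87 : ℝ) < Real.exp a := by
      have h1 : Real.exp (1.056 : ℝ) ≤ Real.exp a := Real.exp_le_exp.mpr (le_of_lt ha1)
      have h2 : Real.exp (1.056 : ℝ) = Real.exp 1 * Real.exp (0.056 : ℝ) := by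
        rw [← Real.exp_add]; norm_num
      have h3 : (1.056 : ℝ) ≤ Real.exp (0.056 : ℝ) := by
        have := Real.add_one_le_exp (0.056 : ℝ); linarith
      nlinarith [Real.exp_pos (0.056 : ℝ)]
    -- upper bound for exp a
    have hexp_hi : Real.exp a < (2.89 : ℝ) := by
      have h1 : Real.exp a ≤ Real.exp (1.057 : ℝ) := Real.exp_le_exp.mpr (le_of_lt ha2)
      have h2 : Real.exp (1.057 : ℝ) = Real.exp 1 * Real.exp (0.057 : ℝ) := by
        rw [← Real.exp_add]; norm_num
      have h3 : Real.exp (0.057 : ℝ) ≤ 1 / 0.943 := by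
        have h4 : (0.943 : ℝ) ≤ Real.exp (-0.057 : ℝ) := by
          have := Real.add_one_le_exp (-0.057 : ℝ); linarith
        have h5 : Real.exp (0.057 : ℝ) * Real.exp (-0.057 : ℝ) = 1 := by
          rw [← Real.exp_add]; norm_num
        nlinarith [Real.exp_pos (0.057 : ℝ)]
      nlinarith [Real.exp_pos (0.057 : ℝ)]
    have hprod_lo : (5.0 : ℝ) < Real.sqrt Real.pi * Real.exp a := by
      have h := mul_le_mul (le_of_lt hs2) (le_of_lt hexp_lo) (by norm_num) (le_of_lt hsπ)
      linarith [h]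
    have hprod_hi : Real.sqrt Real.pi * Real.exp a < (5.2 : ℝ) := by
      have h := mul_le_mul (le_of_lt hs1) (le_of_lt hexp_hi) (by positivity) (by norm_num)
      linarith [h]
    have h1 := mul_lt_mul_of_pos_right hprod_lo hρ
    have h2 := mul_lt_mul_of_pos_right hprod_hi hρ
    rw [abs_lt]
    constructor <;> linarith
end

section
/- For a discrete-time simple random walk on the 3D periodic lattice (ℤ/nℤ)³ with N = n³ sites, the expected first-hitting time of a fixed site, averaged over a uniformly random start, is bounded below by c·N for some constant c > 0 independent of n (for n large); consequently, the continuous-time hitting time τ_D = Θ(N·h²/D) = Θ(L³/(Dh)) diverges as h → 0 with L fixed. -/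
open Filter Topology

/-!
Let `T` be the mean hitting time of `a` for a random walk with uniformly chosen steps `step i`
on a finite group `G` with `|G| = N` sites. Summing the one-step recurrence over all sites gives
Kac's formula: the mean of `T` over the neighbours of `a` is `N - 1`. Multiplying the recurrence
by `T` and summing shows that the Dirichlet energy `∑ᵢ ∑ₓ (T (x + step i) - T x)²` equals
`2 d ∑ₓ T x`, where `d` is the number of steps. A neighbour `a + step i` with `T ≥ N - 1`
alone contributes `(N - 1)²` to the energy, so `∑ₓ T x ≥ (N - 1)² / (2d)`, i.e. the averaged
hitting time is of order `N`.
-/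

structure IsMeanHittingTime {G ι : Type*} [Add G] [Fintype ι] (step : ι → G) (a : G)
    (T : G → ℝ) : Prop where
  apply_target : T a = 0
  apply_of_ne : ∀ x, x ≠ a → T x = 1 + (Fintype.card ι : ℝ)⁻¹ * ∑ i, T (x + step i)

def dirichletEnergy {G ι : Type*} [Add G] [Fintype G] [Fintype ι] (step : ι → G)
    (T : G → ℝ) : ℝ :=
  ∑ i, ∑ x, (T (x + step i) - T x) ^ 2

lemma sq_sub_le_dirichletEnergy {G ι : Type*} [Add G] [Fintype G] [Fintype ι] (step : ι → G)
    (T : G → ℝ) (i : ι) (x : G) : (T (x + step i) - T x) ^ 2 ≤ dirichletEnergy step T :=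
  calc (T (x + step i) - T x) ^ 2
      ≤ ∑ y, (T (y + step i) - T y) ^ 2 :=
        Finset.single_le_sum (f := fun y => (T (y + step i) - T y) ^ 2)
          (fun _ _ => sq_nonneg _) (Finset.mem_univ x)
    _ ≤ dirichletEnergy step T :=
        Finset.single_le_sum (f := fun j => ∑ y, (T (y + step j) - T y) ^ 2)
          (fun _ _ => Finset.sum_nonneg fun _ _ => sq_nonneg _) (Finset.mem_univ i)

lemma sum_comp_add_right {G M : Type*} [AddGroup G] [Fintype G] [AddCommMonoid M] (F : G → M)
    (v : G) : ∑ x, F (x + v) = ∑ x, F x :=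
  Equiv.sum_comp (Equiv.addRight v) F

lemma sum_sq_apply_add_sub {G : Type*} [AddGroup G] [Fintype G] (T : G → ℝ) (v : G) :
    ∑ x, (T (x + v) - T x) ^ 2 = 2 * ∑ x, T x ^ 2 - 2 * ∑ x, T x * T (x + v) := by
  have expand : ∀ x, (T (x + v) - T x) ^ 2 = T (x + v) ^ 2 + T x ^ 2 - 2 * (T x * T (x + v)) :=
    fun x => by ring
  simp only [expand, Finset.sum_add_distrib, Finset.sum_sub_distrib, ← Finset.mul_sum,
    sum_comp_add_right (T · ^ 2)]
  ring

namespace IsMeanHittingTime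

variable {G ι : Type*} [AddGroup G] [Fintype G] [Fintype ι] [Nonempty ι]
  {step : ι → G} {a : G} {T : G → ℝ}

lemma sum_apply_add_step_target (hT : IsMeanHittingTime step a T) :
    ∑ i, T (a + step i) = Fintype.card ι * (Fintype.card G - 1) := by
  have hd : (Fintype.card ι : ℝ) ≠ 0 := by positivity
  have defect : ∑ x, (T x - 1 - (Fintype.card ι : ℝ)⁻¹ * ∑ i, T (x + step i))
      = -1 - (Fintype.card ι : ℝ)⁻¹ * ∑ i, T (a + step i) := by
    rw [Fintype.sum_eq_single a fun x hx => by rw [hT.apply_of_ne x hx]; ring, hT.apply_target]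
    ring
  have shifted : ∑ x, ∑ i, T (x + step i) = Fintype.card ι * ∑ x, T x := by
    rw [Finset.sum_comm]
    simp only [sum_comp_add_right T, Finset.sum_const, Finset.card_univ, nsmul_eq_mul]
  rw [Finset.sum_sub_distrib, Finset.sum_sub_distrib, ← Finset.mul_sum, shifted] at defect
  simp only [Finset.sum_const, Finset.card_univ, nsmul_eq_mul, mul_one] at defect
  field_simp at defect
  linear_combination defect

lemma dirichletEnergy_eq (hT : IsMeanHittingTime step a T) :
    dirichletEnergy step T = 2 * Fintype.card ι * ∑ x, T x := by
  have hd : (Fintype.card ι : ℝ) ≠ 0 := by positivity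
  have weighted :
      ∀ x, T x ^ 2 - T x - (Fintype.card ι : ℝ)⁻¹ * ∑ i, T x * T (x + step i) = 0 := by
    intro x
    rw [← Finset.mul_sum]
    rcases eq_or_ne x a with rfl | hx
    · rw [hT.apply_target]; ring
    · linear_combination T x * hT.apply_of_ne x hx
  have summed : ∑ x, T x ^ 2 - ∑ x, T x
      - (Fintype.card ι : ℝ)⁻¹ * ∑ i, ∑ x, T x * T (x + step i) = 0 := by
    rw [Finset.sum_comm]
    simpa only [Finset.sum_sub_distrib, Finset.mul_sum] using Fintype.sum_eq_zero _ weighted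
  simp only [dirichletEnergy, sum_sq_apply_add_sub, Finset.sum_sub_distrib, ← Finset.mul_sum,
    Finset.sum_const, Finset.card_univ, nsmul_eq_mul]
  field_simp at summed
  linear_combination 2 * summed

lemma exists_le_apply_add_step_target (hT : IsMeanHittingTime step a T) :
    ∃ i, (Fintype.card G - 1 : ℝ) ≤ T (a + step i) := by
  obtain ⟨i, -, hi⟩ := Finset.exists_le_of_sum_le Finset.univ_nonempty
    (f := fun _ => (Fintype.card G - 1 : ℝ)) (g := fun i => T (a + step i))
    (by simp only [Finset.sum_const, Finset.card_univ, nsmul_eq_mul,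
      hT.sum_apply_add_step_target, le_refl])
  exact ⟨i, hi⟩

theorem sq_card_sub_one_le_sum (hT : IsMeanHittingTime step a T) :
    ((Fintype.card G : ℝ) - 1) ^ 2 ≤ 2 * Fintype.card ι * ∑ x, T x := by
  obtain ⟨i, hi⟩ := hT.exists_le_apply_add_step_target
  have hG : (0 : ℝ) ≤ Fintype.card G - 1 :=
    sub_nonneg.mpr (Nat.one_le_cast.mpr Fintype.card_pos)
  calc ((Fintype.card G : ℝ) - 1) ^ 2
      ≤ (T (a + step i) - T a) ^ 2 := by
        rw [hT.apply_target, sub_zero]; exact pow_le_pow_left₀ hG hi 2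
    _ ≤ dirichletEnergy step T := sq_sub_le_dirichletEnergy step T i a
    _ = 2 * Fintype.card ι * ∑ x, T x := hT.dirichletEnergy_eq

end IsMeanHittingTime

def torusStep (n : ℕ) : Fin 6 → ZMod n × ZMod n × ZMod n :=
  ![(1, 0, 0), -(1, 0, 0), (0, 1, 0), -(0, 1, 0), (0, 0, 1), -(0, 0, 1)]

lemma isMeanHittingTime_torusStep {n : ℕ} {a : ZMod n × ZMod n × ZMod n}
    {T : ZMod n × ZMod n × ZMod n → ℝ} (hTa : T a = 0)
    (hrec : ∀ x, x ≠ a →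
      T x = 1 + (1 / 6) *
        (T (x + (1, 0, 0)) + T (x - (1, 0, 0)) + T (x + (0, 1, 0)) +
          T (x - (0, 1, 0)) + T (x + (0, 0, 1)) + T (x - (0, 0, 1)))) :
    IsMeanHittingTime (torusStep n) a T where
  apply_target := hTa
  apply_of_ne x hx := by
    rw [hrec x hx]
    simp [Fin.sum_univ_six, torusStep, sub_eq_add_neg]

lemma one_div_mul_le_one_div_mul_of_sq_sub_one_le {N S : ℝ} (hN : 2 ≤ N)
    (h : (N - 1) ^ 2 ≤ 12 * S) : 1 / 48 * N ≤ 1 / N * S := by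
  rw [div_mul_eq_mul_div, div_mul_eq_mul_div, div_le_div_iff₀ (by norm_num) (by linarith)]
  nlinarith [sq_nonneg (N - 2)]

/-- For simple random walk on the 3D periodic lattice `(ℤ/nℤ)³` with `N = n³` sites,
the expected hitting time `T x` of a fixed target `a` (characterized by `T a = 0` and the
one-step mean recurrence `T x = 1 + (1/6) Σ_{y ~ x} T y` for `x ≠ a`), averaged over a
uniformly random start, is at least `c·N` for some `c > 0` and all large `n`.
Consequently `τ_D = Θ(L³/(Dh))` diverges as `h → 0⁺` with `L` fixed. -/
theorem torus_hitting_time_lower_bound (L D : ℝ) (hL : 0 < L) (hD : 0 < D) :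
    (∃ c : ℝ, 0 < c ∧ ∃ n₀ : ℕ, ∀ (n : ℕ) [NeZero n], n₀ ≤ n →
      ∀ (a : ZMod n × ZMod n × ZMod n) (T : ZMod n × ZMod n × ZMod n → ℝ),
        T a = 0 →
        (∀ x, x ≠ a →
          T x = 1 + (1 / 6) *
            (T (x + (1, 0, 0)) + T (x - (1, 0, 0)) + T (x + (0, 1, 0)) +
              T (x - (0, 1, 0)) + T (x + (0, 0, 1)) + T (x - (0, 0, 1)))) →
        c * (n : ℝ) ^ 3 ≤ (1 / (n : ℝ) ^ 3) * ∑ x : ZMod n × ZMod n × ZMod n, T x) ∧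
    Tendsto (fun h : ℝ => L ^ 3 / (D * h)) (𝓝[>] 0) atTop := by
  constructor
  · refine ⟨1 / 48, by norm_num, 2, fun n _ hn a T hTa hrec => ?_⟩
    have energy := (isMeanHittingTime_torusStep hTa hrec).sq_card_sub_one_le_sum
    have hcard : (Fintype.card (ZMod n × ZMod n × ZMod n) : ℝ) = (n : ℝ) ^ 3 := by
      simp only [Fintype.card_prod, ZMod.card, Nat.cast_mul]; ring
    rw [hcard, Fintype.card_fin, Nat.cast_ofNat] at energy
    have hN : (2 : ℝ) ≤ (n : ℝ) ^ 3 := by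
      exact_mod_cast hn.trans (Nat.le_self_pow (by norm_num) n)
    exact one_div_mul_le_one_div_mul_of_sq_sub_one_le hN (by linarith)
  · refine (tendsto_inv_nhdsGT_zero.const_mul_atTop (by positivity : 0 < L ^ 3 / D)).congr
      fun h => ?_
    rw [← div_eq_mul_inv, div_div]
end
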